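/- arXiv:1805.03174 — 2 statements merged into one kernel-verified Lean document; each statement's English description precedes it below -/
import Mathlib

section
/- For every n×n matrix A over the max-plus semiring there exists a vector x ∈ R̄^n with x ≠ ε (i.e., not all components equal to ε) such that A⊗x = λ(A)⊗x, where λ(A) is the maximum cycle mean of A. -/
/-!  Max-plus (tropical) semiring `MP = ℝ ∪ {ε}`, `ε = -∞ = ⊥`,
`a ⊕ b = max a b` and `a ⊗ b = a + b`. -/

abbrev MP := WithBot ℝ

/-- Tropical (max-plus) matrix product: `(A ⊗ B) i j = max_k (A i k + B k j)`. -/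
noncomputable def mpMul {α β γ : Type*} [Fintype β] (A : Matrix α β MP) (B : Matrix β γ MP) :
    Matrix α γ MP :=
  fun i j => Finset.univ.sup fun k => A i k + B k j

/-- Tropical matrix-vector product: `(A ⊗ x) i = max_k (A i k + x k)`. -/
noncomputable def mpMulVec {α β : Type*} [Fintype β] (A : Matrix α β MP) (x : β → MP) : α → MP :=
  fun i => Finset.univ.sup fun k => A i k + x k

/-- Diagonal matrix with finite diagonal entries `d i` and off-diagonal entries `ε`. -/
noncomputable def mpDiag {α : Type*} [DecidableEq α] (d : α → ℝ) : Matrix α α MP :=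
  fun i j => if i = j then (d i : MP) else ⊥

/-- Tropical permanent: `maper A = max_{π} Σ_i A i (π i)`. -/
noncomputable def maper {α : Type*} [Fintype α] [DecidableEq α] (A : Matrix α α MP) : MP :=
  Finset.univ.sup fun π : Equiv.Perm α => ∑ i, A i (π i)

/-- Maximum cycle mean:
`λ(A) = sup { (A i₁ i₂ + A i₂ i₃ + ⋯ + A iₖ i₁)/k : k ≥ 1, i₁,…,iₖ }` (`ε` if none finite). -/
noncomputable def mcm {α : Type*} [Fintype α] (A : Matrix α α MP) : MP :=
  sSup {x : MP | ∃ k : ℕ, ∃ hk : 0 < k, ∃ f : Fin k → α,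
    x = WithBot.map (fun w : ℝ => w / (k : ℝ))
      (∑ i : Fin k, A (f i) (f ⟨(i.1 + 1) % k, Nat.mod_lt _ hk⟩))}

/-- Tropical tensor product `A ⊠ B`: the block matrix whose `(k,l)` block is `A ⊗ B k l`;
the row index `(k, i)` denotes position `i` inside block row `k`. -/
noncomputable def mpTensor {α β γ δ : Type*} (A : Matrix α β MP) (B : Matrix γ δ MP) :
    Matrix (γ × α) (δ × β) MP :=
  fun p q => A p.2 q.2 + B p.1 q.1

/-- Tensor product of column vectors: `(x ⊠ y) (k, i) = x i + y k`. -/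
noncomputable def mpTensorVec {α γ : Type*} (x : α → MP) (y : γ → MP) : γ × α → MP :=
  fun p => x p.2 + y p.1

/-- The tropical unit matrix: `0` on the diagonal, `ε` elsewhere. -/
noncomputable def mpUnit (α : Type*) [DecidableEq α] : Matrix α α MP :=
  fun i j => if i = j then 0 else ⊥

/-- `vec X`: the columns of `X` stacked; component `(c, r)` is `X r c`. -/
def mpVec {α β : Type*} (X : Matrix α β MP) : β × α → MP := fun p => X p.2 p.1


/-! If `λ(A) = ε`, no cycle has finite weight, so following finite entries backwards must stop:
some column of `A` is `ε` and the unit vector at that column is an eigenvector.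

Otherwise, cutting closed subwalks out of a walk bounds every cycle mean by the mean of a cycle
of length at most `n`, so `λ(A) = λ` is attained by a cycle. The matrix `B = A - λ` has no
positive cycle, hence every walk is dominated by a walk of length at most `n` with the same
endpoints, and for a node `j` on a cycle of `B` of weight `0` the maximal weight `x i` of such
walks from `i` to `j` satisfies `B ⊗ x = x` and `x j ≥ 0`. -/

open Finset

section Walks

variable {α : Type*}

/-- A walk of length `k` is encoded by `f : ℕ → α`, of which only `f 0, …, f k` matter. -/
noncomputable def walkWeight (A : Matrix α α MP) (k : ℕ) (f : ℕ → α) : MP :=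
  ∑ t ∈ range k, A (f t) (f (t + 1))

@[simp]
lemma walkWeight_zero (A : Matrix α α MP) (f : ℕ → α) : walkWeight A 0 f = 0 :=
  sum_range_zero _

lemma walkWeight_succ (A : Matrix α α MP) (k : ℕ) (f : ℕ → α) :
    walkWeight A (k + 1) f = A (f 0) (f 1) + walkWeight A k (fun t => f (t + 1)) := by
  rw [walkWeight, sum_range_succ', add_comm]
  rfl

lemma walkWeight_add (A : Matrix α α MP) (a m : ℕ) (f : ℕ → α) :
    walkWeight A (a + m) f = walkWeight A a f + walkWeight A m (fun t => f (a + t)) := by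
  simp only [walkWeight, sum_range_add, add_assoc]

lemma walkWeight_congr (A : Matrix α α MP) {k : ℕ} {f g : ℕ → α} (h : ∀ t ≤ k, f t = g t) :
    walkWeight A k f = walkWeight A k g :=
  sum_congr rfl fun t ht => by
    rw [mem_range] at ht
    rw [h t ht.le, h (t + 1) ht]

lemma walkWeight_add_const (A : Matrix α α MP) (c : ℝ) (k : ℕ) (f : ℕ → α) :
    walkWeight (fun i j => A i j + c) k f = walkWeight A k f + ((k * c : ℝ) : MP) := by
  simp [walkWeight, sum_add_distrib, ← WithBot.coe_nsmul, nsmul_eq_mul]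

/-- Cutting the closed subwalk `f a → ⋯ → f (a + d) = f a` out of a walk. -/
lemma walkWeight_splice (A : Matrix α α MP) {a d : ℕ} (m : ℕ) {f : ℕ → α} (h : f (a + d) = f a) :
    walkWeight A (a + d + m) f = walkWeight A d (fun t => f (a + t)) +
      walkWeight A (a + m) (fun t => if t ≤ a then f t else f (t + d)) := by
  have tail : (fun t => if a + t ≤ a then f (a + t) else f (a + t + d)) =
      fun t => f (a + d + t) := by
    funext t
    rcases Nat.eq_zero_or_pos t with rfl | ht
    · simpa using h.symm
    · simp only [if_neg (show ¬a + t ≤ a by omega), add_right_comm]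
  rw [walkWeight_add, walkWeight_add, walkWeight_add, tail,
    walkWeight_congr A (f := fun t => if t ≤ a then f t else f (t + d)) (g := f)
      fun t ht => if_pos ht]
  abel

lemma finite_range_walkWeight [Finite α] (A : Matrix α α MP) (k : ℕ) :
    (Set.range (walkWeight A k)).Finite := by
  refine (Set.finite_range fun g : Fin (k + 1) → α =>
    walkWeight A k fun t => g ⟨min t k, by omega⟩).subset ?_
  rintro _ ⟨f, rfl⟩
  exact ⟨fun t => f t, walkWeight_congr A fun t ht => by simp [min_eq_left ht]⟩

lemma exists_lt_map_eq [Fintype α] (f : ℕ → α) :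
    ∃ a b, a < b ∧ b ≤ Fintype.card α ∧ f a = f b := by
  obtain ⟨a, b, hab, h⟩ :=
    Fintype.exists_ne_map_eq_of_card_lt (fun i : Fin (Fintype.card α + 1) => f i) (by simp)
  rcases Fin.lt_or_lt_of_ne hab with hab | hab
  · exact ⟨a, b, hab, b.is_le, h⟩
  · exact ⟨b, a, hab, a.is_le, h.symm⟩

noncomputable def cycleMean (A : Matrix α α MP) (k : ℕ) (f : ℕ → α) : MP :=
  WithBot.map (fun w : ℝ => w / (k : ℝ)) (walkWeight A k f)

def cycleMeans (A : Matrix α α MP) : Set MP :=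
  {x | ∃ k f, 0 < k ∧ f k = f 0 ∧ cycleMean A k f = x}

lemma walkWeight_eq_sum_mod {A : Matrix α α MP} {k : ℕ} {f : ℕ → α} (hf : f k = f 0) :
    walkWeight A k f = ∑ t ∈ range k, A (f t) (f ((t + 1) % k)) := by
  refine sum_congr rfl fun t ht => ?_
  rcases Nat.lt_or_ge (t + 1) k with h | h
  · rw [Nat.mod_eq_of_lt h]
  · obtain rfl : t + 1 = k := by have := mem_range.mp ht; omega
    rw [Nat.mod_self, hf]

lemma cycleMean_le_coe_iff {A : Matrix α α MP} {k : ℕ} (hk : 0 < k) {f : ℕ → α} {c : ℝ} :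
    cycleMean A k f ≤ c ↔ walkWeight (fun i j => A i j + ((-c : ℝ) : MP)) k f ≤ 0 := by
  have hk' : (0 : ℝ) < k := Nat.cast_pos.mpr hk
  rw [cycleMean, walkWeight_add_const]
  induction walkWeight A k f using WithBot.recBotCoe with
  | bot => simp
  | coe w =>
    rw [WithBot.map_coe, ← WithBot.coe_add, WithBot.coe_le_coe, ← WithBot.coe_zero,
      WithBot.coe_le_coe, div_le_iff₀ hk']
    constructor <;> intro h <;> linarith

lemma cycleMean_eq_coe_iff {A : Matrix α α MP} {k : ℕ} (hk : 0 < k) {f : ℕ → α} {c : ℝ} :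
    cycleMean A k f = c ↔ walkWeight (fun i j => A i j + ((-c : ℝ) : MP)) k f = 0 := by
  have hk' : (0 : ℝ) < k := Nat.cast_pos.mpr hk
  rw [cycleMean, walkWeight_add_const]
  induction walkWeight A k f using WithBot.recBotCoe with
  | bot => simp
  | coe w =>
    rw [WithBot.map_coe, ← WithBot.coe_add, WithBot.coe_inj, ← WithBot.coe_zero,
      WithBot.coe_inj, div_eq_iff hk'.ne']
    constructor <;> intro h <;> linarith

end Walks

section NonposCycles

variable {α : Type*} [Fintype α] {B : Matrix α α MP}

def ShortCyclesNonpos (B : Matrix α α MP) : Prop :=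
  ∀ k f, 0 < k → k ≤ Fintype.card α → f k = f 0 → walkWeight B k f ≤ 0

/-- Repeatedly cutting out a closed subwalk never decreases the weight. -/
lemma ShortCyclesNonpos.exists_short_walk_ge (hB : ShortCyclesNonpos B) (k : ℕ) (f : ℕ → α) :
    ∃ k' ≤ Fintype.card α, ∃ f' : ℕ → α,
      f' 0 = f 0 ∧ f' k' = f k ∧ walkWeight B k f ≤ walkWeight B k' f' := by
  induction k using Nat.strong_induction_on generalizing f with
  | _ k ih =>
  by_cases hk : k ≤ Fintype.card α
  · exact ⟨k, hk, f, rfl, rfl, le_rfl⟩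
  obtain ⟨a, b, hab, hb, hfab⟩ := exists_lt_map_eq f
  obtain ⟨d, rfl⟩ : ∃ d, b = a + d := ⟨b - a, by omega⟩
  obtain ⟨m, rfl⟩ : ∃ m, k = a + d + m := ⟨k - (a + d), by omega⟩
  obtain ⟨k', hk', f', h0, hend, hle⟩ :=
    ih (a + m) (by omega) fun t => if t ≤ a then f t else f (t + d)
  refine ⟨k', hk', f', by simpa using h0, ?_, ?_⟩
  · rw [hend]
    split_ifs with hm
    · obtain rfl : m = 0 := by omega
      exact hfab
    · rw [add_right_comm]
  · have hcycle := hB d (fun t => f (a + t)) (by omega) (by omega) (by simpa using hfab.symm)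
    rw [walkWeight_splice B m hfab.symm]
    exact (add_le_of_nonpos_left hcycle).trans hle

lemma ShortCyclesNonpos.walkWeight_nonpos (hB : ShortCyclesNonpos B) {k : ℕ} {f : ℕ → α}
    (hf : f k = f 0) : walkWeight B k f ≤ 0 := by
  obtain ⟨k', hk', f', h0, hend, hle⟩ := hB.exists_short_walk_ge k f
  refine hle.trans ?_
  rcases Nat.eq_zero_or_pos k' with rfl | hpos
  · simp
  · exact hB k' f' hpos hk' (by rw [hend, h0, hf])

def shortWalkWeights (B : Matrix α α MP) (i j : α) : Set MP :=
  {w | ∃ k ≤ Fintype.card α, ∃ f : ℕ → α, f 0 = i ∧ f k = j ∧ walkWeight B k f = w}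

noncomputable def maxWalkWeight (B : Matrix α α MP) (i j : α) : MP :=
  sSup (shortWalkWeights B i j)

lemma finite_shortWalkWeights (B : Matrix α α MP) (i j : α) :
    (shortWalkWeights B i j).Finite := by
  refine ((Set.finite_Iic (Fintype.card α)).biUnion fun k _ =>
    finite_range_walkWeight B k).subset ?_
  rintro _ ⟨k, hk, f, -, -, rfl⟩
  exact Set.mem_biUnion hk ⟨f, rfl⟩

lemma exists_walkWeight_eq_maxWalkWeight (B : Matrix α α MP) (i j : α) :
    ∃ k ≤ Fintype.card α, ∃ f : ℕ → α, f 0 = i ∧ f k = j ∧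
      walkWeight B k f = maxWalkWeight B i j := by
  have hne : (shortWalkWeights B i j).Nonempty :=
    ⟨_, 1, Fintype.card_pos_iff.mpr ⟨i⟩, fun t => if t = 0 then i else j, rfl, rfl, rfl⟩
  exact hne.csSup_mem (finite_shortWalkWeights B i j)

lemma le_maxWalkWeight {w : MP} {i j : α} (h : w ∈ shortWalkWeights B i j) :
    w ≤ maxWalkWeight B i j :=
  le_csSup (finite_shortWalkWeights B i j).bddAbove h

lemma zero_le_maxWalkWeight_self (j : α) : 0 ≤ maxWalkWeight B j j :=
  le_maxWalkWeight ⟨0, Nat.zero_le _, fun _ => j, rfl, rfl, walkWeight_zero B _⟩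

lemma ShortCyclesNonpos.walkWeight_le_maxWalkWeight (hB : ShortCyclesNonpos B) {k : ℕ}
    {f : ℕ → α} : walkWeight B k f ≤ maxWalkWeight B (f 0) (f k) := by
  obtain ⟨k', hk', f', h0, hend, hle⟩ := hB.exists_short_walk_ge k f
  exact hle.trans (le_maxWalkWeight ⟨k', hk', f', h0, hend, rfl⟩)

/-- Prepending an edge to a walk gives `B ⊗ x ≤ x`; removing the first edge of a walk, or going
once around the zero-weight cycle when the walk is empty, gives `x ≤ B ⊗ x`. -/
lemma ShortCyclesNonpos.mpMulVec_maxWalkWeight (hB : ShortCyclesNonpos B) {k₀ : ℕ}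
    {f₀ : ℕ → α} (hk₀ : 0 < k₀) (hf₀ : f₀ k₀ = f₀ 0) (hcrit : walkWeight B k₀ f₀ = 0) :
    mpMulVec B (maxWalkWeight B · (f₀ 0)) = (maxWalkWeight B · (f₀ 0)) := by
  funext i
  apply le_antisymm
  · refine Finset.sup_le fun m _ => ?_
    dsimp only
    obtain ⟨k, -, f, h0, hk, hf⟩ := exists_walkWeight_eq_maxWalkWeight B m (f₀ 0)
    have hcons := walkWeight_succ B k fun t => if t = 0 then i else f (t - 1)
    simp only [if_pos, one_ne_zero, if_false, Nat.add_sub_cancel, Nat.add_eq_zero_iff,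
      and_false, h0] at hcons
    rw [← hf, ← hcons]
    simpa [hk] using hB.walkWeight_le_maxWalkWeight (k := k + 1)
      (f := fun t => if t = 0 then i else f (t - 1))
  · obtain ⟨k, f, h0, hend, hle⟩ : ∃ k, ∃ f : ℕ → α, f 0 = i ∧ f (k + 1) = f₀ 0 ∧
        maxWalkWeight B i (f₀ 0) ≤ walkWeight B (k + 1) f := by
      obtain ⟨k, -, f, h0, hk, hf⟩ := exists_walkWeight_eq_maxWalkWeight B i (f₀ 0)
      rcases k with _ | k
      · obtain rfl : i = f₀ 0 := h0.symm.trans hk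
        obtain ⟨k₁, rfl⟩ : ∃ k₁, k₀ = k₁ + 1 := ⟨k₀ - 1, by omega⟩
        exact ⟨k₁, f₀, rfl, hf₀, by rw [← hf, hcrit, walkWeight_zero]⟩
      · exact ⟨k, f, h0, hk, hf.ge⟩
    have htail := hB.walkWeight_le_maxWalkWeight (k := k) (f := fun t => f (t + 1))
    rw [hend] at htail
    calc maxWalkWeight B i (f₀ 0) ≤ walkWeight B (k + 1) f := hle
      _ = B i (f 1) + walkWeight B k (fun t => f (t + 1)) := by rw [walkWeight_succ, h0]
      _ ≤ B i (f 1) + maxWalkWeight B (f 1) (f₀ 0) := add_le_add_right htail _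
      _ ≤ mpMulVec B (maxWalkWeight B · (f₀ 0)) i :=
        Finset.le_sup (f := fun m => B i m + maxWalkWeight B m (f₀ 0)) (mem_univ _)

end NonposCycles

section MaxCycleMean

variable {α : Type*} [Fintype α]

lemma mcm_eq_sSup_cycleMeans (A : Matrix α α MP) : mcm A = sSup (cycleMeans A) := by
  have hsum {k : ℕ} {f : ℕ → α} (hf : f k = f 0) :
      ∑ i : Fin k, A (f i) (f ((i + 1) % k)) = walkWeight A k f := by
    rw [walkWeight_eq_sum_mod hf, Fin.sum_univ_eq_sum_range (fun t => A (f t) (f ((t + 1) % k)))]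
  unfold mcm
  congr 1
  ext x
  constructor
  · rintro ⟨k, hk, g, rfl⟩
    let f : ℕ → α := fun t => g ⟨t % k, Nat.mod_lt _ hk⟩
    have hf : f k = f 0 := by simp [f]
    refine ⟨k, f, hk, hf, ?_⟩
    rw [cycleMean, ← hsum hf]
    simp [f, Nat.mod_eq_of_lt]
  · rintro ⟨k, f, hk, hf, rfl⟩
    exact ⟨k, hk, fun i => f i, by rw [cycleMean, ← hsum hf]⟩

lemma cycleMean_le_of_short {A : Matrix α α MP} {c : ℝ}
    (h : ∀ k f, 0 < k → k ≤ Fintype.card α → f k = f 0 → cycleMean A k f ≤ c)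
    {k : ℕ} {f : ℕ → α} (hk : 0 < k) (hf : f k = f 0) : cycleMean A k f ≤ c := by
  have hB : ShortCyclesNonpos fun i j => A i j + ((-c : ℝ) : MP) :=
    fun k f hk hkN hf => (cycleMean_le_coe_iff hk).mp (h k f hk hkN hf)
  exact (cycleMean_le_coe_iff hk).mpr (hB.walkWeight_nonpos hf)

/-- The maximum cycle mean is attained, by a cycle of length at most `card α`: the finitely
many such means have a largest one `m`, and every cycle mean is `≤ m` by
`cycleMean_le_of_short`. -/
lemma exists_isGreatest_cycleMeans [Nonempty α] (A : Matrix α α MP) :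
    ∃ k f, 0 < k ∧ f k = f 0 ∧ IsGreatest (cycleMeans A) (cycleMean A k f) := by
  let S : Set MP :=
    {x | ∃ k f, 0 < k ∧ k ≤ Fintype.card α ∧ f k = f 0 ∧ cycleMean A k f = x}
  have hfin : S.Finite := by
    refine ((Set.finite_Iic (Fintype.card α)).biUnion fun k _ =>
      (finite_range_walkWeight A k).image (WithBot.map fun w : ℝ => w / (k : ℝ))).subset ?_
    rintro _ ⟨k, f, -, hk, -, rfl⟩
    exact Set.mem_biUnion hk ⟨_, ⟨f, rfl⟩, rfl⟩
  have hne : S.Nonempty :=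
    ⟨_, 1, fun _ => Classical.arbitrary α, one_pos, Fintype.card_pos, rfl, rfl⟩
  obtain ⟨k, f, hk, -, hf, hmax⟩ := hne.csSup_mem hfin
  refine ⟨k, f, hk, hf, ⟨k, f, hk, hf, rfl⟩, ?_⟩
  rintro _ ⟨k', f', hk', hf', rfl⟩
  refine WithBot.forall_le_coe_iff_le.mp fun c hc => cycleMean_le_of_short ?_ hk' hf'
  intro k f hk hkN hf
  exact (le_csSup hfin.bddAbove ⟨k, f, hk, hkN, hf, rfl⟩).trans (hmax ▸ hc)

lemma exists_cycleMean_eq_mcm [Nonempty α] (A : Matrix α α MP) :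
    ∃ k f, 0 < k ∧ f k = f 0 ∧ cycleMean A k f = mcm A := by
  obtain ⟨k, f, hk, hf, hmax⟩ := exists_isGreatest_cycleMeans A
  exact ⟨k, f, hk, hf, by rw [mcm_eq_sSup_cycleMeans, hmax.csSup_eq]⟩

lemma cycleMean_le_mcm [Nonempty α] (A : Matrix α α MP) {k : ℕ} {f : ℕ → α} (hk : 0 < k)
    (hf : f k = f 0) : cycleMean A k f ≤ mcm A := by
  obtain ⟨_, _, _, _, hmax⟩ := exists_isGreatest_cycleMeans A
  rw [mcm_eq_sSup_cycleMeans, hmax.csSup_eq]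
  exact hmax.2 ⟨k, f, hk, hf, rfl⟩

lemma mpMulVec_add_const (A : Matrix α α MP) (c : ℝ) (x : α → MP) :
    mpMulVec (fun i j => A i j + c) x = fun i => c + mpMulVec A x i := by
  funext i
  simp only [mpMulVec]
  rw [apply_sup_eq_sup_comp (fun y => (c : MP) + y) (add_max _) (by simp)]
  simp only [Function.comp_def, add_right_comm _ (c : MP), add_comm (c : MP)]

lemma exists_eigenvector_of_mcm_eq_coe [Nonempty α] {A : Matrix α α MP} {l : ℝ}
    (hA : mcm A = l) :
    ∃ x : α → MP, (∃ i, x i ≠ ⊥) ∧ mpMulVec A x = fun i => l + x i := by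
  set B : Matrix α α MP := fun i j => A i j + ((-l : ℝ) : MP)
  have hB : ShortCyclesNonpos B := fun k f hk _ hf =>
    (cycleMean_le_coe_iff hk).mp (hA ▸ cycleMean_le_mcm A hk hf)
  obtain ⟨k₀, f₀, hk₀, hf₀, hcrit⟩ := exists_cycleMean_eq_mcm A
  rw [hA, cycleMean_eq_coe_iff hk₀] at hcrit
  refine ⟨(maxWalkWeight B · (f₀ 0)),
    ⟨f₀ 0, ne_bot_of_le_ne_bot WithBot.zero_ne_bot (zero_le_maxWalkWeight_self _)⟩, ?_⟩
  have hAB : A = fun i j => B i j + l := by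
    funext i j
    simp only [B, add_assoc, ← WithBot.coe_add, neg_add_cancel, WithBot.coe_zero, add_zero]
  rw [hAB, mpMulVec_add_const, hB.mpMulVec_maxWalkWeight hk₀ hf₀ hcrit]

/-- Without a cycle of finite weight, following finite entries backwards from any node must
stop, so some column of `A` is entirely `ε`. -/
lemma exists_col_eq_bot_of_mcm_eq_bot [Nonempty α] {A : Matrix α α MP} (hA : mcm A = ⊥) :
    ∃ j, ∀ i, A i j = ⊥ := by
  by_contra! h
  choose g hg using h
  obtain ⟨a, b, hab, -, hfab⟩ := exists_lt_map_eq fun t => g^[t] (Classical.arbitrary α)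
  obtain ⟨p, rfl⟩ : ∃ p, b = a + p := ⟨b - a, by omega⟩
  let f : ℕ → α := fun t => g^[p - t] (g^[a] (Classical.arbitrary α))
  have hf : f p = f 0 := by
    simp only [f, Nat.sub_self, Nat.sub_zero, ← Function.iterate_add_apply]
    rw [zero_add, hfab, add_comm]
  have hstep (t : ℕ) (ht : t < p) : f t = g (f (t + 1)) := by
    simp only [f, ← Function.iterate_succ_apply' g]
    congr 1
    omega
  have hweight : walkWeight A p f ≠ ⊥ := by
    rw [walkWeight, Ne, WithBot.sum_eq_bot_iff]
    rintro ⟨t, ht, hbot⟩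
    rw [hstep t (mem_range.mp ht)] at hbot
    exact hg _ hbot
  have hmean := cycleMean_le_mcm A (by omega) hf
  rw [hA, le_bot_iff, cycleMean, WithBot.map_eq_bot_iff] at hmean
  exact hweight hmean

theorem exists_eigenvector_mcm_of_nonempty [Nonempty α] (A : Matrix α α MP) :
    ∃ x : α → MP, (∃ i, x i ≠ ⊥) ∧ mpMulVec A x = fun i => mcm A + x i := by
  classical
  induction h : mcm A using WithBot.recBotCoe with
  | bot =>
    obtain ⟨j, hj⟩ := exists_col_eq_bot_of_mcm_eq_bot h
    refine ⟨fun k => if k = j then 0 else ⊥, ⟨j, by simp⟩, funext fun i => ?_⟩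
    simp only [mpMulVec, WithBot.bot_add, Finset.sup_eq_bot_iff]
    intro k _
    split_ifs with hk
    · rw [hk, hj, WithBot.bot_add]
    · rw [WithBot.add_bot]
  | coe l => exact exists_eigenvector_of_mcm_eq_coe h

end MaxCycleMean

/-- Every `n × n` max-plus matrix (`n ≥ 1`) has an eigenvector `x ≠ ε`
associated with the maximum cycle mean `λ(A)`. -/
theorem exists_eigenvector_mcm (n : ℕ) (hn : 0 < n) (A : Matrix (Fin n) (Fin n) MP) :
    ∃ x : Fin n → MP, (∃ i, x i ≠ ⊥) ∧
      mpMulVec A x = fun i => mcm A + x i :=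
  have : Nonempty (Fin n) := ⟨⟨0, hn⟩⟩
  exists_eigenvector_mcm_of_nonempty A
end

section
/- For a max-plus matrix A ∈ R̄^{m×n} and vector b ∈ R̄^m, the system A⊗x = b has a solution x if and only if the vector x̄ = A^#⊗'b is a solution, i.e., if and only if A⊗(A^#⊗'b) = b. -/
/-!  Max-plus algebra over `R̄ = ℝ ∪ {-∞}`, embedded in `EReal = ℝ ∪ {±∞}`
(membership in `R̄` is expressed by the hypothesis `≠ ⊤`), together with the dual
min-plus operations `a ⊕' b = min a b` and `a ⊗' b` (`= a + b` when
`{a,b} ≠ {-∞,+∞}`, and `(-∞) ⊗' (+∞) = (+∞) ⊗' (-∞) = +∞`). -/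

/-- Dual addition `a ⊗' b` on `EReal`. -/
noncomputable def dualAdd (a b : EReal) : EReal := -((-a) + (-b))

/-- Max-plus matrix product over `EReal`. -/
noncomputable def eMul {α β γ : Type*} [Fintype β] (A : Matrix α β EReal)
    (B : Matrix β γ EReal) : Matrix α γ EReal :=
  fun i j => ⨆ k, A i k + B k j

/-- Max-plus matrix-vector product over `EReal`. -/
noncomputable def eMulVec {α β : Type*} [Fintype β] (A : Matrix α β EReal)
    (x : β → EReal) : α → EReal :=
  fun i => ⨆ k, A i k + x k

/-- Min-plus matrix-vector product: `(M ⊗' v) i = min_k (M i k ⊗' v k)`. -/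
noncomputable def eMinMulVec {α β : Type*} [Fintype β] (M : Matrix α β EReal)
    (v : β → EReal) : α → EReal :=
  fun i => ⨅ k, dualAdd (M i k) (v k)

/-- The conjugate `A^# = -Aᵀ`. -/
noncomputable def econj {α β : Type*} (A : Matrix α β EReal) : Matrix β α EReal := fun i j => -(A j i)

/-- Tropical tensor product over `EReal`: block matrix whose `(k,l)` block is `A ⊗ B k l`. -/
noncomputable def eTensor {α β γ δ : Type*} (A : Matrix α β EReal) (B : Matrix γ δ EReal) :
    Matrix (γ × α) (δ × β) EReal :=
  fun p q => A p.2 q.2 + B p.1 q.1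

/-- `vec X`: the columns of `X` stacked; component `(c, r)` is `X r c`. -/
def eVec {α β : Type*} (X : Matrix α β EReal) : β × α → EReal := fun p => X p.2 p.1

/-! `x ↦ A ⊗ x` and `b ↦ A^# ⊗' b` form a Galois connection, because `a + x ≤ c ↔ x ≤ (-a) ⊗' c`
holds in `EReal` without exception; hence `A ⊗ (A^# ⊗' (A ⊗ x)) = A ⊗ x`. Entries `⊤` of
`A^# ⊗' b` can be replaced by `⊥`: when `b` is finite they only meet `⊥` entries of `A`. -/

theorem add_le_iff_le_dualAdd_neg {a x c : EReal} : a + x ≤ c ↔ x ≤ dualAdd (-a) c := by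
  induction a using EReal.rec <;> induction c using EReal.rec <;> induction x using EReal.rec
  case coe.coe.coe a c x =>
    rw [dualAdd, neg_neg]
    norm_cast
    constructor <;> intro h <;> linarith
  all_goals simp [dualAdd]

theorem gc_eMulVec_eMinMulVec_econj {α β : Type*} [Fintype α] [Fintype β]
    (A : Matrix α β EReal) : GaloisConnection (eMulVec A) (eMinMulVec (econj A)) := by
  intro x b
  simp only [Pi.le_def, eMulVec, eMinMulVec, econj, iSup_le_iff, le_iInf_iff,
    add_le_iff_le_dualAdd_neg]
  exact forall_comm

theorem add_ite_top_bot {a x : EReal} (h : a + x ≠ ⊤) : a + (if x = ⊤ then ⊥ else x) = a + x := by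
  split_ifs with hx
  · subst hx
    obtain rfl : a = ⊥ := by
      by_contra ha
      exact h (EReal.add_top_of_ne_bot ha)
    rfl
  · rfl

theorem eMulVec_ite_top_bot {α β : Type*} [Fintype β] {A : Matrix α β EReal} {x : β → EReal}
    {b : α → EReal} (hx : eMulVec A x ≤ b) (hb : ∀ i, b i ≠ ⊤) :
    eMulVec A (fun j => if x j = ⊤ then ⊥ else x j) = eMulVec A x := by
  funext i
  refine iSup_congr fun j => add_ite_top_bot (ne_top_of_le_ne_top (hb i) ?_)
  exact (le_iSup (fun k => A i k + x k) j).trans (hx i)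

theorem solvable_iff_principal_solution_general (m n : ℕ) (A : Matrix (Fin m) (Fin n) EReal)
    (b : Fin m → EReal) (hb : ∀ i, b i ≠ ⊤) :
    (∃ x : Fin n → EReal, (∀ j, x j ≠ ⊤) ∧ eMulVec A x = b) ↔
      eMulVec A (eMinMulVec (econj A) b) = b := by
  have gc := gc_eMulVec_eMinMulVec_econj A
  constructor
  · rintro ⟨x, -, rfl⟩
    exact gc.l_u_l_eq_l x
  · intro h
    set y := eMinMulVec (econj A) b
    refine ⟨fun j => if y j = ⊤ then ⊥ else y j, fun j => ?_, ?_⟩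
    · dsimp only
      split_ifs with hj
      exacts [bot_ne_top, hj]
    · rw [eMulVec_ite_top_bot (gc.l_u_le b) hb, h]

/-- `A ⊗ x = b` has a solution `x ∈ R̄ⁿ` if and only if
`x̄ = A^# ⊗' b` is a solution, i.e. iff `A ⊗ (A^# ⊗' b) = b`. -/
theorem solvable_iff_principal_solution (m n : ℕ) (A : Matrix (Fin m) (Fin n) EReal)
    (b : Fin m → EReal) (hA : ∀ i j, A i j ≠ ⊤) (hb : ∀ i, b i ≠ ⊤) :
    (∃ x : Fin n → EReal, (∀ j, x j ≠ ⊤) ∧ eMulVec A x = b) ↔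
      eMulVec A (eMinMulVec (econj A) b) = b :=
  solvable_iff_principal_solution_general m n A b hb
end
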